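/- Let p be an odd prime and G cyclic of order p with generator tau. Let i >= 1 and let v: A/(tau-1)A -> Z/pZ be a nonzero Z_p-linear map, where A = Z_p[zeta] with tau acting by multiplication by a primitive p-th root of unity zeta. Choose a Z_p-linear map f: A -> Z/p^iZ with f((p/(1-zeta))y) congruent to v(y) mod p for all y. Define M'_v as the Z_p-module (Z/p^iZ) x A with tau(t,y) = (t + f(y), zeta y). Then the norm map N on M'_v satisfies N(t,y) = (pt + f((p/(1-zeta))y), 0); consequently H^0_hat(G, M'_v) = 0 and H^1(G, M'_v) is isomorphic to Z/pZ, and the extension 0 -> Z/p^iZ -> M'_v -> A -> 0 is nonsplit. -/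

import Mathlib

/-!
`A = ℤ_p[ζ]` is modelled by the augmentation ideal of `ℤ_p[G] = (ZMod p → ℤ_[p])`, on which `ζ`
acts as the shift. On `A` we have `∑_{j<p} ζ^j = 0` and `ζ^p = 1`, so `P = -∑_{l<p} l ζ^l`
satisfies `P (ζ - 1) = -p`: it is `p/(1-ζ)`. Iterating `τ (t, y) = (t + f y, ζ y)` gives
`τ^j (t, y) = (t + f (∑_{k<j} ζ^k y), ζ^j y)`, and summing over `j < p` gives the norm formula.

The map `y ↦ ∑_m m y_m mod p` identifies `A/(ζ-1)A` with `ℤ/p`, so the nonzero `ζ`-invariant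
`v` has kernel exactly `(ζ-1)A`. As `v ≠ 0`, the `ℤ_p`-linear map `f ∘ P` hits a unit of `ℤ/p^i`,
hence is onto, and every fixed point `(t, 0)` is a norm. If `N (t, y) = 0` then `v y = 0`, so
`y = (ζ-1) z` and `p (t - f z) = 0`; modulo `(τ-1)` the element is then `(p^(i-1) a, 0)` for a
unique `a : ℤ/p`, whence `H¹ ≅ ℤ/p`. An equivariant section `s` would make `f` the coboundary
`y ↦ (s (ζ y - y)).1`, and then `v y ≡ (s ((ζ-1) P y)).1 = -p (s y).1 ≡ 0`.
-/

open Finset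

noncomputable def shiftEnd (p : ℕ) [Fact p.Prime] :
    Module.End ℤ_[p] (ZMod p → ℤ_[p]) :=
  LinearMap.funLeft ℤ_[p] ℤ_[p] (fun i => i - 1)

noncomputable def augSum (p : ℕ) [Fact p.Prime] :
    (ZMod p → ℤ_[p]) →ₗ[ℤ_[p]] ℤ_[p] :=
  ∑ i : ZMod p, LinearMap.proj i

noncomputable def augIdeal (p : ℕ) [Fact p.Prime] :
    Submodule ℤ_[p] (ZMod p → ℤ_[p]) :=
  LinearMap.ker (augSum p)

section WeightedGeomSum

theorem sum_range_sum_range_add_sum_range_succ_nsmul {M : Type*} [AddCommMonoid M]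
    (g : ℕ → M) (n : ℕ) :
    ∑ j ∈ range n, ∑ k ∈ range j, g k + ∑ k ∈ range n, (k + 1) • g k =
      n • ∑ k ∈ range n, g k := by
  induction n with
  | zero => simp
  | succ n ih =>
    rw [sum_range_succ, sum_range_succ (fun k => (k + 1) • g k), add_add_add_comm, ih,
      sum_range_succ]
    simp only [succ_nsmul, smul_add]
    abel

variable {R : Type*} [Ring R] {x : R} {n : ℕ}

theorem sum_range_nsmul_pow_mul_sub_one (x : R) (n : ℕ) :
    (∑ k ∈ range n, k • x ^ k) * (x - 1) = n • x ^ n - (∑ k ∈ range n, x ^ k) * x := by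
  induction n with
  | zero => simp
  | succ n ih =>
    rw [sum_range_succ, add_mul, ih, sum_range_succ, add_mul, smul_mul_assoc, mul_sub, mul_one,
      ← pow_succ, succ_nsmul, smul_sub]
    abel

theorem sum_range_sum_range_pow_of_geom_sum_eq_zero (hgeom : ∑ k ∈ range n, x ^ k = 0) :
    ∑ j ∈ range n, ∑ k ∈ range j, x ^ k = -∑ k ∈ range n, k • x ^ k := by
  have h := sum_range_sum_range_add_sum_range_succ_nsmul (x ^ ·) n
  simp only [add_smul, one_smul, sum_add_distrib, hgeom, smul_zero, add_zero] at h
  exact eq_neg_of_add_eq_zero_left h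

theorem neg_sum_nsmul_pow_mul_sub_one_of_geom_sum_eq_zero (hgeom : ∑ k ∈ range n, x ^ k = 0)
    (hpow : x ^ n = 1) : (-∑ k ∈ range n, k • x ^ k) * (x - 1) = -n := by
  rw [neg_mul, sum_range_nsmul_pow_mul_sub_one, hgeom, hpow, zero_mul, sub_zero, nsmul_one]

theorem sub_one_mul_neg_sum_nsmul_pow_of_geom_sum_eq_zero (hgeom : ∑ k ∈ range n, x ^ k = 0)
    (hpow : x ^ n = 1) : (x - 1) * (-∑ k ∈ range n, k • x ^ k) = -n := by
  have hcomm : Commute x (∑ k ∈ range n, k • x ^ k) :=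
    Commute.sum_right _ _ _ fun k _ => (Commute.self_pow x k).smul_right k
  rw [(hcomm.sub_left (Commute.one_left _)).neg_right.eq,
    neg_sum_nsmul_pow_mul_sub_one_of_geom_sum_eq_zero hgeom hpow]

end WeightedGeomSum

theorem AddMonoid.End.finsetSum_apply {ι M : Type*} [AddCommMonoid M] (s : Finset ι)
    (F : ι → AddMonoid.End M) (m : M) : (∑ j ∈ s, F j) m = ∑ j ∈ s, F j m :=
  AddMonoidHom.finsetSum_apply F s m

theorem AddMonoid.End.sub_apply {M : Type*} [AddCommGroup M] (F G : AddMonoid.End M) (m : M) :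
    (F - G) m = F m - G m :=
  AddMonoidHom.sub_apply F G m

section Twist

variable {R M T : Type*} [Semiring R] [AddCommMonoid M] [Module R M] [AddCommMonoid T]

def twistEnd (f : M →+ T) (ζ : Module.End R M) : AddMonoid.End (T × M) where
  toFun m := (m.1 + f m.2, ζ m.2)
  map_zero' := by simp
  map_add' m n := by ext <;> simp [add_add_add_comm]

variable (f : M →+ T) (ζ : Module.End R M)

@[simp]
theorem twistEnd_apply (m : T × M) : twistEnd f ζ m = (m.1 + f m.2, ζ m.2) := rfl

theorem twistEnd_pow_apply (j : ℕ) (m : T × M) :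
    (twistEnd f ζ ^ j) m = (m.1 + f (∑ k ∈ range j, (ζ ^ k) m.2), (ζ ^ j) m.2) := by
  induction j with
  | zero => simp
  | succ j ih =>
    rw [pow_succ', AddMonoid.End.coe_mul, Function.comp_apply, ih, twistEnd_apply,
      sum_range_succ, map_add, add_assoc, pow_succ', Module.End.mul_apply]

theorem sum_twistEnd_pow_apply (n : ℕ) (m : T × M) :
    (∑ j ∈ range n, twistEnd f ζ ^ j) m =
      (n • m.1 + f ((∑ j ∈ range n, ∑ k ∈ range j, ζ ^ k) m.2), (∑ j ∈ range n, ζ ^ j) m.2) := by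
  simp only [AddMonoid.End.finsetSum_apply, twistEnd_pow_apply, Prod.ext_iff, Prod.fst_sum,
    Prod.snd_sum, sum_add_distrib, sum_const, card_range, map_sum, LinearMap.sum_apply,
    and_self]

end Twist

theorem twistEnd_sub_one_apply {R M T : Type*} [Semiring R] [AddCommGroup M] [Module R M]
    [AddCommGroup T] (f : M →+ T) (ζ : Module.End R M) (m : T × M) :
    (twistEnd f ζ - 1) m = (f m.2, ζ m.2 - m.2) := by
  rw [AddMonoid.End.sub_apply, twistEnd_apply, AddMonoid.End.one_apply, Prod.mk_sub_mk,
    add_sub_cancel_left]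

theorem mem_range_twistEnd_sub_one_iff {R M T : Type*} [Semiring R] [AddCommGroup M] [Module R M]
    [AddCommGroup T] {f : M →+ T} {ζ : Module.End R M} {m : T × M} :
    m ∈ AddMonoidHom.range (twistEnd f ζ - 1 : AddMonoid.End (T × M)) ↔
      ∃ z, f z = m.1 ∧ ζ z - z = m.2 := by
  change (∃ x, (twistEnd f ζ - 1 : AddMonoid.End (T × M)) x = m) ↔ _
  simp only [twistEnd_sub_one_apply, Prod.ext_iff]
  exact ⟨fun ⟨x, hx⟩ => ⟨x.2, hx⟩, fun ⟨z, hz⟩ => ⟨(0, z), hz⟩⟩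

theorem sum_range_natCast_eq_sum_univ {M : Type*} [AddCommMonoid M] (n : ℕ) [NeZero n]
    (g : ZMod n → M) : ∑ j ∈ range n, g j = ∑ m, g m :=
  sum_nbij' (↑) ZMod.val (fun _ _ => mem_univ _) (fun a _ => mem_range.2 a.val_lt)
    (fun _ ha => ZMod.val_cast_of_lt (mem_range.1 ha)) (fun a _ => ZMod.natCast_zmod_val a)
    (fun _ _ => rfl)

section AugIdeal

variable {p : ℕ} [Fact p.Prime]

theorem mem_augIdeal {x : ZMod p → ℤ_[p]} : x ∈ augIdeal p ↔ ∑ m, x m = 0 := by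
  simp [augIdeal, augSum, LinearMap.sum_apply]

theorem shiftEnd_apply (x : ZMod p → ℤ_[p]) (m : ZMod p) : shiftEnd p x m = x (m - 1) := rfl

theorem shiftEnd_pow_apply (j : ℕ) (x : ZMod p → ℤ_[p]) (m : ZMod p) :
    (shiftEnd p ^ j) x m = x (m - j) := by
  induction j generalizing m with
  | zero => simp
  | succ j ih => rw [pow_succ', Module.End.mul_apply, shiftEnd_apply, ih, Nat.cast_succ, sub_sub,
      add_comm]

theorem shiftEnd_pow_p : shiftEnd p ^ p = 1 := by
  ext x m
  simp [shiftEnd_pow_apply]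

theorem eq_zero_of_shiftEnd_apply_eq_self {x : ZMod p → ℤ_[p]} (hx : x ∈ augIdeal p)
    (hfix : shiftEnd p x = x) : x = 0 := by
  have hconst : ∀ m, x m = x 0 := fun m => by
    have := congrFun (Function.iterate_fixed hfix m.val) m
    rwa [← Module.End.pow_apply, shiftEnd_pow_apply, ZMod.natCast_zmod_val, sub_self, eq_comm]
      at this
  rw [mem_augIdeal, Fintype.sum_congr _ _ hconst, sum_const, card_univ, ZMod.card, nsmul_eq_mul,
    mul_eq_zero] at hx
  funext m
  rw [hconst, hx.resolve_left (Nat.cast_ne_zero.2 (Fact.out : p.Prime).ne_zero), Pi.zero_apply]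

theorem exists_shiftEnd_sub_eq {Y : ZMod p → ℤ_[p]} (hY : ∑ m, Y m = 0) :
    ∃ z, shiftEnd p z - z = Y := by
  refine ⟨fun m => -∑ k ∈ range (m.val + 1), Y k, funext fun m => ?_⟩
  obtain ⟨n, hn, rfl⟩ : ∃ n < p, (n : ZMod p) = m := ⟨m.val, m.val_lt, m.natCast_zmod_val⟩
  simp only [Pi.sub_apply, shiftEnd_apply]
  cases n with
  | zero =>
    have hp : 1 ≤ p := (Fact.out : p.Prime).one_le
    have hval : ((0 : ℕ) - 1 : ZMod p) = (p - 1 : ℕ) := by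
      rw [Nat.cast_sub hp, ZMod.natCast_self, Nat.cast_one, Nat.cast_zero]
    rw [hval, ZMod.val_cast_of_lt (by omega), Nat.sub_add_cancel hp,
      sum_range_natCast_eq_sum_univ, hY, ZMod.val_natCast, Nat.zero_mod, sum_range_one]
    simp
  | succ n =>
    have hsub : ((n + 1 : ℕ) - 1 : ZMod p) = n := by push_cast; ring
    rw [hsub, ZMod.val_cast_of_lt (by omega), ZMod.val_cast_of_lt hn, sum_range_succ _ (n + 1)]
    abel

-- Writing `x = ∑ x_m τ^m`, this is the class of `x` in `I/I² ≅ G` for `I` the augmentation ideal.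
noncomputable def augWeight (p : ℕ) [Fact p.Prime] : (ZMod p → ℤ_[p]) →+ ZMod p where
  toFun x := ∑ m, m * PadicInt.toZMod (x m)
  map_zero' := by simp
  map_add' x y := by simp [mul_add, sum_add_distrib]

theorem augWeight_apply (x : ZMod p → ℤ_[p]) :
    augWeight p x = ∑ m, m * PadicInt.toZMod (x m) := rfl

theorem augWeight_shiftEnd (x : ZMod p → ℤ_[p]) :
    augWeight p (shiftEnd p x) = augWeight p x + PadicInt.toZMod (∑ m, x m) := by
  simp only [augWeight_apply, shiftEnd_apply, map_sum]
  rw [← Equiv.sum_comp (Equiv.addRight 1)]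
  simp [add_mul, sum_add_distrib]

theorem exists_augWeight_eq_one : ∃ y : augIdeal p, augWeight p y = 1 := by
  have hp : Fact (1 < p) := ⟨(Fact.out : p.Prime).one_lt⟩
  refine ⟨⟨Pi.single 1 1 - Pi.single 0 1, mem_augIdeal.2 (by simp [sum_sub_distrib])⟩, ?_⟩
  simp [augWeight_apply, mul_sub, sum_sub_distrib, Pi.single_apply]

theorem exists_shiftEnd_sub_eq_of_augWeight_eq_zero {y : ZMod p → ℤ_[p]} (hy : y ∈ augIdeal p)
    (hw : augWeight p y = 0) : ∃ z ∈ augIdeal p, shiftEnd p z - z = y := by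
  obtain ⟨z, hz⟩ := exists_shiftEnd_sub_eq (mem_augIdeal.1 hy)
  obtain ⟨u, hu⟩ : (p : ℤ_[p]) ∣ ∑ m, z m := by
    rw [← hz, map_sub, augWeight_shiftEnd, add_sub_cancel_left] at hw
    rwa [← Ideal.mem_span_singleton, ← PadicInt.maximalIdeal_eq_span_p, ← PadicInt.ker_toZMod,
      RingHom.mem_ker]
  -- subtracting the constant `u` normalises the sum without changing `shiftEnd p z - z`
  refine ⟨z - fun _ => u, mem_augIdeal.2 ?_, ?_⟩
  · simp [sum_sub_distrib, hu]
  · have hconst : shiftEnd p (fun _ => u) = fun _ => u := rfl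
    rw [map_sub, hconst, sub_sub_sub_cancel_right, hz]

theorem shiftEnd_mem_augIdeal {x : ZMod p → ℤ_[p]} (hx : x ∈ augIdeal p) :
    shiftEnd p x ∈ augIdeal p := by
  rw [mem_augIdeal] at hx ⊢
  exact (Equiv.sum_comp (Equiv.subRight 1) x).trans hx

noncomputable def augShift (p : ℕ) [Fact p.Prime] : Module.End ℤ_[p] (augIdeal p) :=
  (shiftEnd p).restrict fun _ => shiftEnd_mem_augIdeal

theorem coe_augShift_pow_apply (j : ℕ) (x : augIdeal p) :
    ((augShift p ^ j) x : ZMod p → ℤ_[p]) = (shiftEnd p ^ j) x := by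
  induction j with
  | zero => rfl
  | succ j ih => rw [pow_succ', Module.End.mul_apply, pow_succ', Module.End.mul_apply, ← ih]; rfl

theorem augShift_pow_p : augShift p ^ p = 1 :=
  LinearMap.ext fun x => Subtype.ext <| by rw [coe_augShift_pow_apply, shiftEnd_pow_p]; rfl

theorem geom_sum_augShift : ∑ j ∈ range p, augShift p ^ j = 0 := by
  refine LinearMap.ext fun x => Subtype.ext <| funext fun m => ?_
  simp only [LinearMap.sum_apply, Submodule.coe_sum, Finset.sum_apply, coe_augShift_pow_apply,
    shiftEnd_pow_apply]
  rw [sum_range_natCast_eq_sum_univ (g := fun k => (x : ZMod p → ℤ_[p]) (m - k))]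
  exact (Equiv.sum_comp (Equiv.subLeft m) (x : ZMod p → ℤ_[p])).trans (mem_augIdeal.1 x.2)

theorem eq_zero_of_augShift_apply_eq_self {y : augIdeal p} (hy : augShift p y = y) : y = 0 :=
  Subtype.ext <| eq_zero_of_shiftEnd_apply_eq_self y.2 (congrArg Subtype.val hy)

theorem exists_augShift_sub_eq_of_apply_eq_zero {v : augIdeal p →+ ZMod p} (hv : v ≠ 0)
    (hvshift : ∀ y, v (augShift p y) = v y) {y : augIdeal p} (hy : v y = 0) :
    ∃ z, augShift p z - z = y := by
  have hsolve : ∀ y : augIdeal p, augWeight p y = 0 → ∃ z, augShift p z - z = y := fun y hw => by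
    obtain ⟨z, hz, hzy⟩ := exists_shiftEnd_sub_eq_of_augWeight_eq_zero y.2 hw
    exact ⟨⟨z, hz⟩, Subtype.ext hzy⟩
  -- `v` kills `(ζ - 1) A ⊇ ker (augWeight p)`, hence is a multiple of `augWeight p`
  obtain ⟨y₁, hy₁⟩ := exists_augWeight_eq_one (p := p)
  have hfactor : ∀ y, v y = v y₁ * augWeight p y := fun y => by
    obtain ⟨z, hz⟩ := hsolve (y - (augWeight p y).val • y₁) (by
      rw [Submodule.coe_sub, Submodule.coe_smul_of_tower, map_sub, map_nsmul, hy₁, nsmul_one,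
        ZMod.natCast_zmod_val, sub_self])
    have := congrArg v hz
    rw [map_sub, hvshift, sub_self, map_sub, map_nsmul, eq_comm, sub_eq_zero, nsmul_eq_mul,
      ZMod.natCast_zmod_val, mul_comm] at this
    exact this
  have hv₁ : v y₁ ≠ 0 := fun h => hv <| AddMonoidHom.ext fun y => by
    rw [hfactor, h, zero_mul, AddMonoidHom.zero_apply]
  exact hsolve y ((mul_eq_zero.1 ((hfactor y).symm.trans hy)).resolve_left hv₁)

noncomputable def pDivOneSubShift (p : ℕ) [Fact p.Prime] : Module.End ℤ_[p] (augIdeal p) :=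
  -∑ l ∈ range p, l • augShift p ^ l

theorem sum_range_sum_range_augShift_pow :
    ∑ j ∈ range p, ∑ k ∈ range j, augShift p ^ k = pDivOneSubShift p :=
  sum_range_sum_range_pow_of_geom_sum_eq_zero (R := Module.End ℤ_[p] (augIdeal p))
    geom_sum_augShift

theorem pDivOneSubShift_apply_augShift_sub_self (z : augIdeal p) :
    pDivOneSubShift p (augShift p z - z) = -(p • z) := by
  have := LinearMap.congr_fun (neg_sum_nsmul_pow_mul_sub_one_of_geom_sum_eq_zero
    (R := Module.End ℤ_[p] (augIdeal p)) geom_sum_augShift augShift_pow_p) z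
  simpa only [pDivOneSubShift, Module.End.mul_apply, LinearMap.sub_apply, Module.End.one_apply,
    LinearMap.neg_apply, Module.End.natCast_apply] using this

theorem augShift_apply_sub_self_pDivOneSubShift (y : augIdeal p) :
    augShift p (pDivOneSubShift p y) - pDivOneSubShift p y = -(p • y) := by
  have := LinearMap.congr_fun (sub_one_mul_neg_sum_nsmul_pow_of_geom_sum_eq_zero
    (R := Module.End ℤ_[p] (augIdeal p)) geom_sum_augShift augShift_pow_p) y
  simpa only [pDivOneSubShift, Module.End.mul_apply, LinearMap.sub_apply, Module.End.one_apply,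
    LinearMap.neg_apply, Module.End.natCast_apply] using this

end AugIdeal

section PowTorsion

variable {p i : ℕ}

theorem pow_pred_mul_val_injective [NeZero p] (hi : 1 ≤ i) :
    Function.Injective fun a : ZMod p => ((p ^ (i - 1) * a.val : ℕ) : ZMod (p ^ i)) := by
  intro a b (h : ((p ^ (i - 1) * a.val : ℕ) : ZMod (p ^ i)) = (p ^ (i - 1) * b.val : ℕ))
  rw [ZMod.natCast_eq_natCast_iff, ← Nat.sub_add_cancel hi, pow_succ, Nat.add_sub_cancel] at h
  rw [← ZMod.natCast_zmod_val a, ← ZMod.natCast_zmod_val b, ZMod.natCast_eq_natCast_iff]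
  exact Nat.ModEq.mul_left_cancel' (pow_ne_zero _ (NeZero.ne p)) h

theorem exists_pow_pred_mul_val_eq_of_mul_eq_zero [NeZero p] (hi : 1 ≤ i) {t : ZMod (p ^ i)}
    (ht : (p : ZMod (p ^ i)) * t = 0) :
    ∃ a : ZMod p, ((p ^ (i - 1) * a.val : ℕ) : ZMod (p ^ i)) = t := by
  have : NeZero (p ^ i) := ⟨pow_ne_zero _ (NeZero.ne p)⟩
  have hpi : p ^ i = p ^ (i - 1) * p := by rw [← pow_succ, Nat.sub_add_cancel hi]
  rw [← ZMod.natCast_zmod_val t, ← Nat.cast_mul, ZMod.natCast_eq_zero_iff] at ht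
  obtain ⟨k, hk⟩ : p ^ (i - 1) ∣ t.val :=
    (Nat.mul_dvd_mul_iff_right (NeZero.pos p)).1 (by rwa [← hpi, mul_comm])
  refine ⟨k, ?_⟩
  rw [← ZMod.natCast_zmod_val t, hk, ZMod.natCast_eq_natCast_iff, hpi, ZMod.val_natCast]
  exact Nat.ModEq.mul_left' _ (Nat.mod_modEq k p)

theorem isUnit_of_castHom_apply_ne_zero (hp : p.Prime) (hi : 1 ≤ i) {h : p ∣ p ^ i}
    {a : ZMod (p ^ i)} (ha : ZMod.castHom h (ZMod p) a ≠ 0) : IsUnit a := by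
  have : NeZero (p ^ i) := ⟨pow_ne_zero _ hp.ne_zero⟩
  rw [← ZMod.natCast_zmod_val a, map_natCast, Ne, ZMod.natCast_eq_zero_iff] at ha
  rw [← ZMod.natCast_zmod_val a]
  exact (ZMod.isUnit_natCast_iff_not_dvd_pow hp hi).2 ha

theorem surjective_of_castHom_apply_ne_zero [Fact p.Prime] {M : Type*} [AddCommGroup M]
    [Module ℤ_[p] M] (hi : 1 ≤ i) {h : p ∣ p ^ i} (g : M →+ ZMod (p ^ i))
    (hg : ∀ (c : ℤ_[p]) (y : M), g (c • y) = PadicInt.toZModPow i c * g y) {y₀ : M}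
    (hy₀ : ZMod.castHom h (ZMod p) (g y₀) ≠ 0) : Function.Surjective g := by
  have : NeZero (p ^ i) := ⟨pow_ne_zero _ (Fact.out : p.Prime).ne_zero⟩
  obtain ⟨u, hu⟩ := isUnit_of_castHom_apply_ne_zero Fact.out hi hy₀
  refine fun t => ⟨((t * ↑u⁻¹).val : ℤ_[p]) • y₀, ?_⟩
  rw [hg, map_natCast, ZMod.natCast_zmod_val, ← hu, mul_assoc, Units.inv_mul, mul_one]

end PowTorsion

section Extension

variable {p i : ℕ} [Fact p.Prime] {f : augIdeal p →+ ZMod (p ^ i)}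

theorem sum_twistEnd_pow_apply_eq (m : ZMod (p ^ i) × augIdeal p) :
    (∑ j ∈ range p, twistEnd f (augShift p) ^ j) m =
      ((p : ZMod (p ^ i)) * m.1 + f (pDivOneSubShift p m.2), 0) := by
  rw [sum_twistEnd_pow_apply, sum_range_sum_range_augShift_pow, geom_sum_augShift, nsmul_eq_mul,
    LinearMap.zero_apply]

theorem exists_eq_sum_twistEnd_pow_apply_of_apply_eq_self (hi : 1 ≤ i)
    (hfs : ∀ (c : ℤ_[p]) (y : augIdeal p), f (c • y) = PadicInt.toZModPow i c * f y)
    {h : p ∣ p ^ i} {y₀ : augIdeal p}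
    (hy₀ : ZMod.castHom h (ZMod p) (f (pDivOneSubShift p y₀)) ≠ 0)
    {m : ZMod (p ^ i) × augIdeal p} (hm : twistEnd f (augShift p) m = m) :
    ∃ y, m = (∑ j ∈ range p, twistEnd f (augShift p) ^ j) y := by
  have hm₂ : m.2 = 0 := eq_zero_of_augShift_apply_eq_self (congrArg Prod.snd hm)
  have hfP : ∀ (c : ℤ_[p]) y, f.comp (pDivOneSubShift p).toAddMonoidHom (c • y) =
      PadicInt.toZModPow i c * f.comp (pDivOneSubShift p).toAddMonoidHom y := fun c y => by
    simp [hfs]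
  obtain ⟨y, hy⟩ := surjective_of_castHom_apply_ne_zero hi _ hfP hy₀ m.1
  refine ⟨(0, y), ?_⟩
  rw [sum_twistEnd_pow_apply_eq, mul_zero, zero_add]
  exact Prod.ext hy.symm hm₂

theorem mem_ker_sum_twistEnd_pow_iff {m : ZMod (p ^ i) × augIdeal p} :
    m ∈ AddMonoidHom.ker
        ((∑ j ∈ range p, twistEnd f (augShift p) ^ j : AddMonoid.End _) : _ →+ _) ↔
      (p : ZMod (p ^ i)) * m.1 + f (pDivOneSubShift p m.2) = 0 := by
  change (∑ j ∈ range p, twistEnd f (augShift p) ^ j : AddMonoid.End _) m = 0 ↔ _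
  rw [sum_twistEnd_pow_apply_eq, Prod.ext_iff]
  exact ⟨fun h => h.1, fun h => ⟨h, rfl⟩⟩

theorem card_ker_sum_twistEnd_pow_quotient (hi : 1 ≤ i) {v : augIdeal p →+ ZMod p} (hv : v ≠ 0)
    (hvshift : ∀ y, v (augShift p y) = v y) {h : p ∣ p ^ i}
    (hf : ∀ y, ZMod.castHom h (ZMod p) (f (pDivOneSubShift p y)) = v y) :
    Nat.card
      (↥(AddMonoidHom.ker
          ((∑ j ∈ range p, twistEnd f (augShift p) ^ j : AddMonoid.End _) : _ →+ _)) ⧸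
        ((AddMonoidHom.range (twistEnd f (augShift p) - 1 : AddMonoid.End _)).addSubgroupOf
          (AddMonoidHom.ker
            ((∑ j ∈ range p, twistEnd f (augShift p) ^ j : AddMonoid.End _) : _ →+ _)))) =
      p := by
  -- `a ↦ p^(i-1) a` identifies `ℤ/p` with the `p`-torsion of `ℤ/p^i`
  set ι : ZMod p → ZMod (p ^ i) := fun a => ((p ^ (i - 1) * a.val : ℕ) : ZMod (p ^ i))
  have hιker : ∀ a, (ι a, 0) ∈ AddMonoidHom.ker
      ((∑ j ∈ range p, twistEnd f (augShift p) ^ j : AddMonoid.End _) : _ →+ _) := fun a => by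
    rw [mem_ker_sum_twistEnd_pow_iff, map_zero, map_zero, add_zero, ← Nat.cast_mul,
      ← mul_assoc, ← pow_succ', Nat.sub_add_cancel hi, Nat.cast_mul, ZMod.natCast_self, zero_mul]
  let Θ (a : ZMod p) :
      _ ⧸ (AddMonoidHom.range (twistEnd f (augShift p) - 1 : AddMonoid.End _)).addSubgroupOf _ :=
    QuotientAddGroup.mk ⟨(ι a, 0), hιker a⟩
  have hΘ : ∀ a x, Θ a = QuotientAddGroup.mk x ↔
      ∃ z, f z = x.1.1 - ι a ∧ augShift p z - z = x.1.2 := fun a x => by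
    rw [QuotientAddGroup.eq, AddSubgroup.mem_addSubgroupOf, mem_range_twistEnd_sub_one_iff]
    simp [neg_add_eq_sub]
  refine (Nat.card_eq_of_bijective Θ ⟨fun a b hab => ?_, fun q => ?_⟩).symm.trans
    (Nat.card_zmod p)
  · obtain ⟨z, hfz, hz⟩ := (hΘ a _).1 hab
    rw [eq_zero_of_augShift_apply_eq_self (sub_eq_zero.1 hz), map_zero, eq_comm,
      sub_eq_zero] at hfz
    exact pow_pred_mul_val_injective hi hfz.symm
  obtain ⟨⟨⟨t, y⟩, hx⟩, rfl⟩ := QuotientAddGroup.mk_surjective q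
  rw [mem_ker_sum_twistEnd_pow_iff] at hx
  have hvy : v y = 0 := by
    rw [← hf, eq_neg_of_add_eq_zero_right hx, map_neg, map_mul, map_natCast, ZMod.natCast_self,
      zero_mul, neg_zero]
  obtain ⟨z, rfl⟩ := exists_augShift_sub_eq_of_apply_eq_zero hv hvshift hvy
  rw [pDivOneSubShift_apply_augShift_sub_self, map_neg, map_nsmul, nsmul_eq_mul,
    ← sub_eq_add_neg, ← mul_sub] at hx
  obtain ⟨a, ha : ι a = t - f z⟩ := exists_pow_pred_mul_val_eq_of_mul_eq_zero hi hx
  exact ⟨a, (hΘ a _).2 ⟨z, by rw [ha, sub_sub_cancel], rfl⟩⟩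

theorem not_exists_section_twistEnd_apply_eq {v : augIdeal p →+ ZMod p} (hv : v ≠ 0)
    {h : p ∣ p ^ i} (hf : ∀ y, ZMod.castHom h (ZMod p) (f (pDivOneSubShift p y)) = v y) :
    ¬ ∃ s : augIdeal p →+ ZMod (p ^ i) × augIdeal p,
      (∀ y, (s y).2 = y) ∧ ∀ y, twistEnd f (augShift p) (s y) = s (augShift p y) := by
  rintro ⟨s, hs₂, hsτ⟩
  have hcob : ∀ y, f y = (s (augShift p y) - s y).1 := fun y => by
    rw [← hsτ, twistEnd_apply, hs₂, Prod.fst_sub, add_sub_cancel_left]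
  refine hv (AddMonoidHom.ext fun y => ?_)
  rw [← hf, hcob, ← map_sub, augShift_apply_sub_self_pDivOneSubShift, map_neg, map_nsmul,
    Prod.fst_neg, Prod.smul_fst, map_neg, map_nsmul, nsmul_eq_mul, ZMod.natCast_self, zero_mul,
    neg_zero, AddMonoidHom.zero_apply]

end Extension

theorem stmt_18_general (p i : ℕ) [Fact p.Prime] (hi : 1 ≤ i)
    -- multiplication by ζ on A, i.e. the restricted shift
    (zeta : Module.End ℤ_[p] ↥(augIdeal p))
    (hzeta : ∀ x : ↥(augIdeal p),
      (zeta x : ZMod p → ℤ_[p]) = shiftEnd p (x : ZMod p → ℤ_[p]))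
    -- the operator p/(1-ζ) = -∑_{l<p} l ζ^l on A
    (P : Module.End ℤ_[p] ↥(augIdeal p))
    (hP : P = - ∑ l ∈ Finset.range p, l • zeta ^ l)
    -- the data v and f
    (v : ↥(augIdeal p) →+ ZMod p) (hv : v ≠ 0)
    (hvshift : ∀ y, v (zeta y) = v y)
    (f : ↥(augIdeal p) →+ ZMod (p ^ i))
    (hfs : ∀ (c : ℤ_[p]) (y : ↥(augIdeal p)), f (c • y) = PadicInt.toZModPow i c * f y)
    (hf : ∀ y, ZMod.castHom (dvd_pow_self p (Nat.one_le_iff_ne_zero.mp hi)) (ZMod p)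
      (f (P y)) = v y)
    -- the module M'_v and the action of τ
    (τ' : AddMonoid.End (ZMod (p ^ i) × ↥(augIdeal p)))
    (hτ : ∀ m, τ' m = (m.1 + f m.2, zeta m.2)) :
    -- the norm formula N (t, y) = (p t + f((p/(1-ζ)) y), 0)
    (∀ m : ZMod (p ^ i) × ↥(augIdeal p),
      (∑ j ∈ Finset.range p, τ' ^ j) m = ((p : ZMod (p ^ i)) * m.1 + f (P m.2), 0)) ∧
    -- Ĥ⁰(G, M'_v) = 0: every fixed point is a norm
    (∀ m : ZMod (p ^ i) × ↥(augIdeal p), τ' m = m →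
      ∃ y, m = (∑ j ∈ Finset.range p, τ' ^ j) y) ∧
    -- H¹(G, M'_v) ≅ ℤ/p
    Nat.card
      (↥(AddMonoidHom.ker ((∑ j ∈ Finset.range p, τ' ^ j : AddMonoid.End _) : _ →+ _)) ⧸
        ((AddMonoidHom.range (τ' - 1 : AddMonoid.End _)).addSubgroupOf
          (AddMonoidHom.ker ((∑ j ∈ Finset.range p, τ' ^ j : AddMonoid.End _) : _ →+ _)))) =
      p ∧
    -- the extension 0 → ℤ/p^i → M'_v → A → 0 is nonsplit
    ¬ ∃ s : ↥(augIdeal p) →+ ZMod (p ^ i) × ↥(augIdeal p),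
        (∀ y, (s y).2 = y) ∧ (∀ y, τ' (s y) = s (zeta y)) ∧
        (∀ (c : ℤ_[p]) (y : ↥(augIdeal p)),
          (s (c • y)).1 = PadicInt.toZModPow i c * (s y).1 ∧
          (s (c • y)).2 = c • (s y).2) := by
  obtain rfl : zeta = augShift p := LinearMap.ext fun x => Subtype.ext (hzeta x)
  obtain rfl : P = pDivOneSubShift p := hP
  obtain rfl : τ' = twistEnd f (augShift p) := DFunLike.ext _ _ hτ
  obtain ⟨y₀, hy₀⟩ := DFunLike.ne_iff.1 hv
  refine ⟨sum_twistEnd_pow_apply_eq, fun m hm => ?_,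
    card_ker_sum_twistEnd_pow_quotient hi hv hvshift hf,
    fun ⟨s, hs₂, hsτ, _⟩ => not_exists_section_twistEnd_apply_eq hv hf ⟨s, hs₂, hsτ⟩⟩
  exact exists_eq_sum_twistEnd_pow_apply_of_apply_eq_self hi hfs (y₀ := y₀) (by rwa [hf]) hm

theorem stmt_18 (p i : ℕ) [Fact p.Prime] (hp : Odd p) (hi : 1 ≤ i)
    -- multiplication by ζ on A, i.e. the restricted shift
    (zeta : Module.End ℤ_[p] ↥(augIdeal p))
    (hzeta : ∀ x : ↥(augIdeal p),
      (zeta x : ZMod p → ℤ_[p]) = shiftEnd p (x : ZMod p → ℤ_[p]))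
    -- the operator p/(1-ζ) = -∑_{l<p} l ζ^l on A
    (P : Module.End ℤ_[p] ↥(augIdeal p))
    (hP : P = - ∑ l ∈ Finset.range p, l • zeta ^ l)
    -- the data v and f
    (v : ↥(augIdeal p) →+ ZMod p) (hv : v ≠ 0)
    (hvshift : ∀ y, v (zeta y) = v y)
    (f : ↥(augIdeal p) →+ ZMod (p ^ i))
    (hfs : ∀ (c : ℤ_[p]) (y : ↥(augIdeal p)), f (c • y) = PadicInt.toZModPow i c * f y)
    (hf : ∀ y, ZMod.castHom (dvd_pow_self p (Nat.one_le_iff_ne_zero.mp hi)) (ZMod p)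
      (f (P y)) = v y)
    -- the module M'_v and the action of τ
    (τ' : AddMonoid.End (ZMod (p ^ i) × ↥(augIdeal p)))
    (hτ : ∀ m, τ' m = (m.1 + f m.2, zeta m.2)) :
    -- the norm formula N (t, y) = (p t + f((p/(1-ζ)) y), 0)
    (∀ m : ZMod (p ^ i) × ↥(augIdeal p),
      (∑ j ∈ Finset.range p, τ' ^ j) m = ((p : ZMod (p ^ i)) * m.1 + f (P m.2), 0)) ∧
    -- Ĥ⁰(G, M'_v) = 0: every fixed point is a norm
    (∀ m : ZMod (p ^ i) × ↥(augIdeal p), τ' m = m →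
      ∃ y, m = (∑ j ∈ Finset.range p, τ' ^ j) y) ∧
    -- H¹(G, M'_v) ≅ ℤ/p
    Nat.card
      (↥(AddMonoidHom.ker ((∑ j ∈ Finset.range p, τ' ^ j : AddMonoid.End _) : _ →+ _)) ⧸
        ((AddMonoidHom.range (τ' - 1 : AddMonoid.End _)).addSubgroupOf
          (AddMonoidHom.ker ((∑ j ∈ Finset.range p, τ' ^ j : AddMonoid.End _) : _ →+ _)))) =
      p ∧
    -- the extension 0 → ℤ/p^i → M'_v → A → 0 is nonsplit
    ¬ ∃ s : ↥(augIdeal p) →+ ZMod (p ^ i) × ↥(augIdeal p),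
        (∀ y, (s y).2 = y) ∧ (∀ y, τ' (s y) = s (zeta y)) ∧
        (∀ (c : ℤ_[p]) (y : ↥(augIdeal p)),
          (s (c • y)).1 = PadicInt.toZModPow i c * (s y).1 ∧
          (s (c • y)).2 = c • (s y).2) :=
  stmt_18_general p i hi zeta hzeta P hP v hv hvshift f hfs hf τ' hτ
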